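/- arXiv:1611.09927 — 2 statements merged into one kernel-verified Lean document; each statement's English description precedes it below -/
import Mathlib

section
/- If C₁, C₂, C₃ are purely imaginary unit quaternions satisfying C₁C₂C₃ = 1, then there exists a unit quaternion D such that D C₁ D⁻¹ = 𝐢, D C₂ D⁻¹ = 𝐣, and D C₃ D⁻¹ = −𝐤. That is, up to simultaneous conjugation, (𝐢, 𝐣, −𝐤) is the only triple of purely imaginary unit quaternions whose product is 1. -/
open Quaternion

noncomputable def qi : ℍ[ℝ] := ⟨0, 1, 0, 0⟩
noncomputable def qj : ℍ[ℝ] := ⟨0, 0, 1, 0⟩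
noncomputable def qk : ℍ[ℝ] := ⟨0, 0, 0, 1⟩

/-
A purely imaginary unit quaternion squares to `-1`, and then `C₁C₂C₃ = 1` forces
`C₃ = C₂C₁ = -C₁C₂`. If `p² = q² = -1`, then `(1 - qp)p = p + q = q(1 - qp)`, so `1 - qp`
conjugates `p` to `q` unless `p = -q`, where an anticommuting unit does the job instead.
Conjugate `C₁` to `𝐢` this way; the image of `C₂` anticommutes with `𝐢`, as does `𝐣`, so the
conjugator taking it to `𝐣` commutes with `𝐢`. The product of the two conjugators, normalized,
then sends `C₃ = C₂C₁` to `𝐣𝐢 = -𝐤`.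
-/

section Ring

variable {R : Type*} [Ring R] {a p q : R}

theorem semiconjBy_one_sub_mul (hp : p * p = -1) (hq : q * q = -1) :
    SemiconjBy (1 - q * p) p q := by
  unfold SemiconjBy
  calc (1 - q * p) * p = p - q * (p * p) := by noncomm_ring
    _ = q - q * q * p := by rw [hp, hq]; noncomm_ring
    _ = q * (1 - q * p) := by noncomm_ring

theorem one_sub_mul_ne_zero (hq : q * q = -1) (hpq : p ≠ -q) : 1 - q * p ≠ 0 := by
  intro h
  apply hpq
  calc p = -(q * q * p) := by rw [hq]; noncomm_ring
    _ = -(q * 1) := by rw [mul_assoc, ← sub_eq_zero.mp h]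
    _ = -q := by rw [mul_one]

theorem commute_one_sub_mul (hap : a * p = -(p * a)) (haq : a * q = -(q * a)) :
    Commute a (1 - q * p) := by
  unfold Commute SemiconjBy
  calc a * (1 - q * p) = a - a * q * p := by noncomm_ring
    _ = (1 - q * p) * a := by rw [haq, neg_mul, mul_assoc, hap]; noncomm_ring

theorem eq_mul_of_mul_mul_eq_one {a b c : R} (ha : a * a = -1) (hb : b * b = -1)
    (habc : a * b * c = 1) : c = b * a :=
  calc c = -(b * b) * c := by rw [hb]; noncomm_ring
    _ = b * (a * a) * b * c := by rw [ha]; noncomm_ring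
    _ = b * a * (a * b * c) := by noncomm_ring
    _ = b * a := by rw [habc, mul_one]

theorem anticommute_of_mul_mul_eq_one {a b c : R} (ha : a * a = -1) (hb : b * b = -1)
    (hc : c * c = -1) (habc : a * b * c = 1) : a * b = -(b * a) := by
  rw [eq_mul_of_mul_mul_eq_one ha hb habc] at hc
  calc a * b = -(a * b * (b * a * (b * a))) := by rw [hc]; noncomm_ring
    _ = -(a * (b * b) * a * (b * a)) := by noncomm_ring
    _ = -(b * a) := by rw [hb, mul_neg_one, neg_mul, ha]; noncomm_ring

end Ring

section DivisionRing

variable {R : Type*} [DivisionRing R] {d x y x' y' : R}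

theorem SemiconjBy.right_unique (hd : d ≠ 0) (h : SemiconjBy d x y) (h' : SemiconjBy d x y') :
    y = y' :=
  mul_right_cancel₀ hd (h.eq.symm.trans h'.eq)

theorem SemiconjBy.mul_self_eq_neg_one (hd : d ≠ 0) (h : SemiconjBy d x y) (hx : x * x = -1) :
    y * y = -1 := by
  have hyy := h.mul_right h
  rw [hx] at hyy
  exact hyy.right_unique hd (SemiconjBy.neg_one_right d)

theorem SemiconjBy.anticommute (hd : d ≠ 0) (h : SemiconjBy d x y) (h' : SemiconjBy d x' y')
    (hx : x * x' = -(x' * x)) : y * y' = -(y' * y) :=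
  (h.mul_right h').right_unique hd (by rw [hx]; exact (h'.mul_right h).neg_right)

end DivisionRing

theorem exists_norm_eq_one_mul_mul_inv_eq {A : Type*} [NormedDivisionRing A] [NormedAlgebra ℝ A]
    {d : A} (hd : d ≠ 0) : ∃ u : A, ‖u‖ = 1 ∧ ∀ x y, SemiconjBy d x y → u * x * u⁻¹ = y := by
  have hnd : ‖d‖ ≠ 0 := norm_ne_zero_iff.2 hd
  refine ⟨‖d‖⁻¹ • d, by rw [norm_smul, norm_inv, norm_norm, inv_mul_cancel₀ hnd], fun x y h => ?_⟩
  rw [mul_inv_eq_iff_eq_mul₀ (smul_ne_zero (inv_ne_zero hnd) hd)]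
  exact (h.smul_left _).eq

theorem Quaternion.mul_self_eq_neg_one {q : ℍ[ℝ]} (hn : ‖q‖ = 1) (hr : q.re = 0) :
    q * q = -1 := by
  rw [← sq, sq_eq_neg_normSq.mpr hr, normSq_eq_norm_mul_self, hn, mul_one, coe_one]

theorem qi_mul_qi : qi * qi = -1 := by
  ext <;> simp [re_mul, imI_mul, imJ_mul, imK_mul] <;> simp [qi]

theorem qj_mul_qj : qj * qj = -1 := by
  ext <;> simp [re_mul, imI_mul, imJ_mul, imK_mul] <;> simp [qj]

theorem qj_mul_qi : qj * qi = -qk := by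
  ext <;> simp [re_mul, imI_mul, imJ_mul, imK_mul] <;> simp [qi, qj, qk]

theorem qi_mul_qj_eq_neg_qj_mul_qi : qi * qj = -(qj * qi) := by
  ext <;> simp [re_mul, imI_mul, imJ_mul, imK_mul] <;> simp [qi, qj]

theorem qi_ne_zero : qi ≠ 0 := fun h => by simpa [qi] using congrArg (·.imI) h

theorem qj_ne_zero : qj ≠ 0 := fun h => by simpa [qj] using congrArg (·.imJ) h

theorem exists_semiconjBy_qi {p : ℍ[ℝ]} (hp : p * p = -1) : ∃ d ≠ 0, SemiconjBy d p qi := by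
  by_cases hpi : p = -qi
  · refine ⟨qj, qj_ne_zero, ?_⟩
    rw [hpi, SemiconjBy, mul_neg, qi_mul_qj_eq_neg_qj_mul_qi]
  · exact ⟨_, one_sub_mul_ne_zero qi_mul_qi hpi, semiconjBy_one_sub_mul hp qi_mul_qi⟩

theorem exists_semiconjBy_qj_commute_qi {p : ℍ[ℝ]} (hp : p * p = -1)
    (hpi : qi * p = -(p * qi)) :
    ∃ d ≠ 0, SemiconjBy d p qj ∧ Commute d qi := by
  by_cases hpj : p = -qj
  · refine ⟨qi, qi_ne_zero, ?_, Commute.refl qi⟩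
    rw [hpj, SemiconjBy, mul_neg, qi_mul_qj_eq_neg_qj_mul_qi, neg_neg]
  · exact ⟨_, one_sub_mul_ne_zero qj_mul_qj hpj, semiconjBy_one_sub_mul hp qj_mul_qj,
      (commute_one_sub_mul hpi qi_mul_qj_eq_neg_qj_mul_qi).symm⟩

/-- If `C₁, C₂, C₃` are purely imaginary unit quaternions with `C₁C₂C₃ = 1`, then the triple
`(C₁, C₂, C₃)` is simultaneously conjugate to `(𝐢, 𝐣, −𝐤)` by a unit quaternion. -/
theorem traceless_triple_conjugate_to_ijk (C₁ C₂ C₃ : ℍ[ℝ])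
    (h₁ : ‖C₁‖ = 1) (h₂ : ‖C₂‖ = 1) (h₃ : ‖C₃‖ = 1)
    (hi₁ : C₁.re = 0) (hi₂ : C₂.re = 0) (hi₃ : C₃.re = 0)
    (hprod : C₁ * C₂ * C₃ = 1) :
    ∃ D : ℍ[ℝ], ‖D‖ = 1 ∧
      D * C₁ * D⁻¹ = qi ∧ D * C₂ * D⁻¹ = qj ∧ D * C₃ * D⁻¹ = -qk := by
  have hC₁ := Quaternion.mul_self_eq_neg_one h₁ hi₁
  have hC₂ := Quaternion.mul_self_eq_neg_one h₂ hi₂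
  have hC₃ := Quaternion.mul_self_eq_neg_one h₃ hi₃
  obtain ⟨d₁, hd₁, hd₁C₁⟩ := exists_semiconjBy_qi hC₁
  have hd₁C₂ : SemiconjBy d₁ C₂ (d₁ * C₂ * d₁⁻¹) := (mul_inv_eq_iff_eq_mul₀ hd₁).mp rfl
  obtain ⟨d₂, hd₂, hd₂p, hd₂i⟩ := exists_semiconjBy_qj_commute_qi
    (hd₁C₂.mul_self_eq_neg_one hd₁ hC₂)
    (hd₁C₁.anticommute hd₁ hd₁C₂ (anticommute_of_mul_mul_eq_one hC₁ hC₂ hC₃ hprod))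
  have hD₁ : SemiconjBy (d₂ * d₁) C₁ qi := SemiconjBy.mul_left hd₂i hd₁C₁
  have hD₂ : SemiconjBy (d₂ * d₁) C₂ qj := hd₂p.mul_left hd₁C₂
  have hD₃ : SemiconjBy (d₂ * d₁) C₃ (-qk) := by
    rw [eq_mul_of_mul_mul_eq_one hC₁ hC₂ hprod, ← qj_mul_qi]
    exact hD₂.mul_right hD₁
  obtain ⟨D, hD, hconj⟩ := exists_norm_eq_one_mul_mul_inv_eq (mul_ne_zero hd₂ hd₁)
  exact ⟨D, hD, hconj _ _ hD₁, hconj _ _ hD₂, hconj _ _ hD₃⟩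
end

section
/- Let r ≥ 2 and let (C₁, …, C_{r+1}) ∈ R. If M ∈ SU(r) commutes with every Cⱼ (j = 1, …, r+1), then M is a scalar matrix, i.e., M = c·I for some complex number c with c^r = 1. In other words, the stabilizer of any point of R under the simultaneous conjugation action of SU(r) is the center of SU(r). -/
/-!
Write `ζ = e^{-iπ/r}`. Every element of `C_μ` is `ζ • H_w`, where `H_w = 1 - 2 w w*` is the
reflection in a unit vector `w`, so a point of `R` gives unit vectors `w₁, …, w_{r+1}` with
`H_{w₁} ⋯ H_{w_{r+1}} = s • 1` for `s = ζ^{-(r+1)}`, and `s²` is a primitive `r`-th root of unity.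
As `s ≠ 1`, a vector orthogonal to every `wⱼ` is fixed by the product, hence zero: the `wⱼ` span.

A unitary `M` commuting with every `H_{wⱼ}` has each `wⱼ` as an eigenvector, and eigenvectors for
distinct eigenvalues are orthogonal. Let `T` be the orthogonal projection onto the eigenspace
containing `w₁`. The reflections in vectors orthogonal to it fix `T`, the others commute with `T`
and fix `ker T`, so their product `B` is `s T + (1 - T)`. Comparing `det B = s ^ rank T` with
`det B = ±1` gives `r ∣ rank T`, hence `T = 1`: all `wⱼ` lie in one eigenspace of `M`, and since
they span, `M` is scalar.
-/

open Matrix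

/-- The diagonal matrix `diag(e^{iπ(r−1)/r}, e^{−iπ/r}, …, e^{−iπ/r})` representing the
conjugacy class labeled by `μ = ((r−1)/(2r), −1/(2r), …, −1/(2r))`. -/
noncomputable def Dmu (r : ℕ) : Matrix (Fin r) (Fin r) ℂ :=
  Matrix.diagonal fun i =>
    if (i : ℕ) = 0 then Complex.exp ((Real.pi : ℂ) * ((r : ℂ) - 1) / (r : ℂ) * Complex.I)
    else Complex.exp (-((Real.pi : ℂ) / (r : ℂ)) * Complex.I)

/-- The conjugacy class `C_μ ⊂ SU(r)` of the matrix `Dmu r`. -/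
def Cmu (r : ℕ) : Set (Matrix (Fin r) (Fin r) ℂ) :=
  {X | ∃ M ∈ specialUnitaryGroup (Fin r) ℂ, M * Dmu r * M⁻¹ = X}

/-- The set `R = {(C₁, …, C_{r+1}) ∈ C_μ^{r+1} : C₁⋯C_{r+1} = 1}`. -/
def Rset (r : ℕ) : Set (Fin (r + 1) → Matrix (Fin r) (Fin r) ℂ) :=
  {C | (∀ j, C j ∈ Cmu r) ∧ (List.ofFn C).prod = 1}

namespace List

variable {M : Type*} [Monoid M]

lemma prod_map_mul_eq_prod_filter_map_mul {α : Type*} (l : List α) (f : α → M) (p : α → Bool)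
    {t : M} (hcomm : ∀ a ∈ l, p a → Commute (f a) t) (hfix : ∀ a ∈ l, ¬p a → f a * t = t) :
    (l.map f).prod * t = ((l.filter p).map f).prod * t := by
  induction l with
  | nil => rfl
  | cons a l ih =>
    have ih := ih (fun b hb => hcomm b (mem_cons_of_mem a hb))
      (fun b hb => hfix b (mem_cons_of_mem a hb))
    have hrest : Commute ((l.filter p).map f).prod t :=
      Commute.list_prod_left _ _ fun b hb => by
        obtain ⟨c, hc, rfl⟩ := mem_map.mp hb
        obtain ⟨hcl, hpc⟩ := mem_filter.mp hc
        exact hcomm c (mem_cons_of_mem a hcl) hpc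
    by_cases hpa : p a
    · simp [filter_cons_of_pos hpa, mul_assoc, ih]
    · rw [filter_cons_of_neg hpa, map_cons, prod_cons, mul_assoc, ih, hrest.eq, ← mul_assoc,
        hfix a mem_cons_self hpa]

lemma prod_map_smul {R A : Type*} [CommMonoid R] [Monoid A] [MulAction R A] [IsScalarTower R A A]
    [SMulCommClass R A A] {α : Type*} (l : List α) (c : R) (f : α → A) :
    (l.map fun a => c • f a).prod = c ^ l.length • (l.map f).prod := by
  induction l with
  | nil => simp
  | cons a l ih => simp [ih, smul_mul_smul_comm, pow_succ']

end List

namespace Matrix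

variable {n : Type*} [Fintype n] {𝕜 : Type*} [RCLike 𝕜]

lemma ext_of_forall_mulVec_eq {l : List (n → 𝕜)} (hspan : ∀ x, (∀ w ∈ l, star w ⬝ᵥ x = 0) → x = 0)
    {A B : Matrix n n 𝕜} (h : ∀ w ∈ l, A *ᵥ w = B *ᵥ w) : A = B := by
  have : (A - B)ᴴ = 0 := ext_iff_mulVec.mpr fun y => by
    refine (hspan _ fun w hw => ?_).trans (zero_mulVec y).symm
    rw [dotProduct_mulVec, ← star_mulVec, sub_mulVec, h w hw, sub_self, star_zero,
      zero_dotProduct]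
  rwa [conjTranspose_eq_zero, sub_eq_zero] at this

lemma isHermitian_of_forall_mulVec_eq_smul {l : List (n → 𝕜)}
    (hspan : ∀ x, (∀ w ∈ l, star w ⬝ᵥ x = 0) → x = 0) {T : Matrix n n 𝕜} (c : (n → 𝕜) → ℝ)
    (hT : ∀ w ∈ l, T *ᵥ w = (c w : 𝕜) • w)
    (horth : ∀ v ∈ l, ∀ w ∈ l, c v ≠ c w → star v ⬝ᵥ w = 0) : T.IsHermitian := by
  refine ext_of_forall_mulVec_eq hspan fun w hw => sub_eq_zero.mp <| hspan _ fun v hv => ?_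
  rw [dotProduct_sub, dotProduct_mulVec, ← star_mulVec, hT v hv, hT w hw, star_smul,
    smul_dotProduct, dotProduct_smul, RCLike.star_def, RCLike.conj_ofReal]
  by_cases hc : c v = c w
  · rw [hc, sub_self]
  · simp [horth v hv w hw hc]

variable [DecidableEq n]

lemma isUnit_of_rank_eq_card {K : Type*} [Field K] {A : Matrix n n K}
    (h : A.rank = Fintype.card n) : IsUnit A := by
  rw [← mulVec_surjective_iff_isUnit]
  change Function.Surjective A.mulVecLin
  rw [← LinearMap.range_eq_top]
  apply Submodule.eq_top_of_finrank_eq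
  rw [← Matrix.rank, h, Module.finrank_fintype_fun_eq_card]

open Polynomial in
lemma exists_mulVec_eq_ite_of_forall_mulVec_eq_smul {K : Type*} [Field K] [DecidableEq K]
    {M : Matrix n n K} {l : List (n → K)} (μ : (n → K) → K) (hM : ∀ w ∈ l, M *ᵥ w = μ w • w)
    (μ₀ : K) : ∃ T : Matrix n n K, ∀ w ∈ l, T *ᵥ w = if μ w = μ₀ then w else 0 := by
  set q : K[X] := ∏ v ∈ (l.map μ).toFinset.erase μ₀, (X - C v)
  have hq : ∀ w ∈ l, aeval M q *ᵥ w = q.eval (μ w) • w := fun w hw => by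
    rw [← toLinAlgEquiv'_apply, ← aeval_algHom_apply]
    exact Module.End.aeval_apply_of_mem_apply_eq_smul (hM w hw)
  have hq₀ : q.eval μ₀ ≠ 0 := by
    simp [q, eval_prod, Finset.prod_eq_zero_iff, sub_eq_zero]
  refine ⟨(q.eval μ₀)⁻¹ • aeval M q, fun w hw => ?_⟩
  rw [smul_mulVec, hq w hw, smul_smul]
  split_ifs with h
  · rw [h, inv_mul_cancel₀ hq₀, one_smul]
  · have : q.eval (μ w) = 0 := by
      simpa [q, eval_prod, Finset.prod_eq_zero_iff, sub_eq_zero, h] using ⟨w, hw, rfl⟩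
    rw [this, mul_zero, zero_smul]

lemma IsHermitian.eigenvalues_eq_zero_or_one_of_isIdempotentElem {T : Matrix n n 𝕜}
    (hT : T.IsHermitian) (hT2 : IsIdempotentElem T) (i : n) :
    hT.eigenvalues i = 0 ∨ hT.eigenvalues i = 1 := by
  have hv := hT.mulVec_eigenvectorBasis i
  have hne := (WithLp.ofLp_eq_zero 2).ne.2 <| hT.eigenvectorBasis.orthonormal.ne_zero i
  have h2 : (hT.eigenvalues i * hT.eigenvalues i) • ⇑(hT.eigenvectorBasis i)
      = hT.eigenvalues i • ⇑(hT.eigenvectorBasis i) := by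
    rw [← smul_smul, ← hv, ← mulVec_smul, ← hv, mulVec_mulVec, hT2.eq]
  exact IsIdempotentElem.iff_eq_zero_or_one.mp (smul_left_injective _ hne h2)

lemma IsHermitian.det_one_add_smul_of_isIdempotentElem {T : Matrix n n 𝕜} (hT : T.IsHermitian)
    (hT2 : IsIdempotentElem T) (c : 𝕜) : (1 + c • T).det = (1 + c) ^ T.rank := by
  set U := hT.eigenvectorUnitary
  have hconj : 1 + c • T
      = U * diagonal (fun i => 1 + c * hT.eigenvalues i) * star (U : Matrix n n 𝕜) := by
    conv_lhs => rw [hT.spectral_theorem, ← map_one (Unitary.conjStarAlgAut 𝕜 _ U), ← map_smul,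
      ← map_add]
    rw [Unitary.conjStarAlgAut_apply, ← diagonal_one, ← diagonal_smul, diagonal_add]
    rfl
  have hdet : (U : Matrix n n 𝕜).det * (star (U : Matrix n n 𝕜)).det = 1 := by
    rw [← det_mul, ← Unitary.coe_star, Unitary.coe_mul_star_self, det_one]
  rw [hconj, det_mul, det_mul, mul_right_comm, hdet, one_mul, det_diagonal,
    hT.rank_eq_card_non_zero_eigs, Fintype.card_subtype, ← Finset.prod_const,
    Finset.prod_filter]
  refine Finset.prod_congr rfl fun i _ => ?_
  rcases hT.eigenvalues_eq_zero_or_one_of_isIdempotentElem hT2 i with h | h <;> simp [h]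

lemma star_mulVec_dotProduct_mulVec_of_mem_unitaryGroup {M : Matrix n n 𝕜}
    (hM : M ∈ unitaryGroup n 𝕜) (v w : n → 𝕜) : star (M *ᵥ v) ⬝ᵥ (M *ᵥ w) = star v ⬝ᵥ w := by
  rw [star_mulVec, dotProduct_mulVec, vecMul_vecMul, ← star_eq_conjTranspose,
    mem_unitaryGroup_iff'.mp hM, vecMul_one]

lemma dotProduct_eq_zero_of_mem_unitaryGroup_of_ne {M : Matrix n n 𝕜}
    (hM : M ∈ unitaryGroup n 𝕜) {v w : n → 𝕜} {a b : 𝕜} (hv : star v ⬝ᵥ v = 1)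
    (hMv : M *ᵥ v = a • v) (hMw : M *ᵥ w = b • w) (hab : a ≠ b) : star v ⬝ᵥ w = 0 := by
  have hvv := star_mulVec_dotProduct_mulVec_of_mem_unitaryGroup hM v v
  have hvw := star_mulVec_dotProduct_mulVec_of_mem_unitaryGroup hM v w
  simp only [hMv, hMw, star_smul, smul_dotProduct, dotProduct_smul, hv, smul_eq_mul,
    mul_one] at hvv hvw
  by_contra hne
  apply hab
  have hb : b * star a = 1 := mul_right_cancel₀ hne (by simpa [mul_assoc] using hvw)
  calc a = a * (b * star a) := by rw [hb, mul_one]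
    _ = b * (a * star a) := by ring
    _ = b := by rw [hvv, mul_one]

def householder (w : n → 𝕜) : Matrix n n 𝕜 := 1 - (2 : 𝕜) • vecMulVec w (star w)

lemma householder_mulVec (w x : n → 𝕜) :
    householder w *ᵥ x = x - (2 * (star w ⬝ᵥ x)) • w := by
  simp [householder, sub_mulVec, smul_mulVec, vecMulVec_mulVec, smul_smul]

lemma householder_mulVec_self {w : n → 𝕜} (hw : star w ⬝ᵥ w = 1) :
    householder w *ᵥ w = -w := by
  rw [householder_mulVec, hw]
  module

lemma det_householder {w : n → 𝕜} (hw : star w ⬝ᵥ w = 1) : (householder w).det = -1 := by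
  rw [householder, vecMulVec_eq Unit, ← Matrix.smul_mul, det_one_sub_mul_comm, det_unique]
  simp [replicateRow_mul_replicateCol_apply, hw]
  norm_num

lemma mulVec_eq_smul_of_commute_householder {M : Matrix n n 𝕜} {w : n → 𝕜}
    (hw : star w ⬝ᵥ w = 1) (h : Commute M (householder w)) :
    M *ᵥ w = (star w ⬝ᵥ (M *ᵥ w)) • w := by
  have := congrArg (· *ᵥ w) h.eq
  simp only [← mulVec_mulVec, householder_mulVec_self hw, mulVec_neg, householder_mulVec] at this
  have h2 : (2 : 𝕜) • (M *ᵥ w) = (2 : 𝕜) • ((star w ⬝ᵥ (M *ᵥ w)) • w) := by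
    rw [smul_smul]; linear_combination (norm := module) -this
  exact smul_right_injective _ two_ne_zero h2

lemma mul_householder_mul_star_of_mem_unitaryGroup {U : Matrix n n 𝕜} (hU : U ∈ unitaryGroup n 𝕜)
    (w : n → 𝕜) : U * householder w * star U = householder (U *ᵥ w) := by
  rw [householder, householder, mul_sub, sub_mul, mul_one, mem_unitaryGroup_iff.mp hU,
    Matrix.mul_smul, Matrix.smul_mul, mul_vecMulVec, vecMulVec_mul, star_eq_conjTranspose,
    ← star_mulVec]

lemma eq_zero_of_forall_dotProduct_eq_zero_of_prod_householder {l : List (n → 𝕜)} {s : 𝕜}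
    (hprod : (l.map householder).prod = s • 1) (hs : s ≠ 1) {x : n → 𝕜}
    (hx : ∀ w ∈ l, star w ⬝ᵥ x = 0) : x = 0 := by
  have hfix : (l.map householder).prod • x = x :=
    (MulAction.stabilizerSubmonoid _ x).list_prod_mem fun A hA => by
      obtain ⟨w, hw, rfl⟩ := List.mem_map.mp hA
      simp [householder_mulVec, hx w hw]
  rw [hprod, smul_eq_mulVec, smul_mulVec, one_mulVec] at hfix
  have : (s - 1) • x = 0 := by rw [sub_smul, hfix, one_smul, sub_self]
  exact (smul_eq_zero.mp this).resolve_left (sub_ne_zero.mpr hs)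

lemma householder_mul_of_mulVec_eq_smul {T : Matrix n n 𝕜} (hT : T.IsHermitian) {w : n → 𝕜}
    {a : 𝕜} (ha : IsSelfAdjoint a) (hTw : T *ᵥ w = a • w) :
    householder w * T = T - (2 * a) • vecMulVec w (star w) := by
  have : star w ᵥ* T = a • star w := by
    rw [← hT.eq, ← star_mulVec, hTw, star_smul, ha.star_eq]
  rw [householder, sub_mul, one_mul, smul_mul, vecMulVec_mul, this, vecMulVec_smul, smul_smul]

lemma mul_householder_of_mulVec_eq_smul {T : Matrix n n 𝕜} {w : n → 𝕜} {a : 𝕜}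
    (hTw : T *ᵥ w = a • w) : T * householder w = T - (2 * a) • vecMulVec w (star w) := by
  rw [householder, mul_sub, mul_one, Matrix.mul_smul, mul_vecMulVec, hTw, smul_vecMulVec, smul_smul]

lemma prod_map_householder_filter_eq_one_add_smul {l : List (n → 𝕜)} {s : 𝕜}
    (hprod : (l.map householder).prod = s • 1) {T : Matrix n n 𝕜} (hT : T.IsHermitian)
    (p : (n → 𝕜) → Bool) (hTw : ∀ w ∈ l, T *ᵥ w = if p w then w else 0) :
    ((l.filter p).map householder).prod = 1 + (s - 1) • T := by
  have hin : ∀ w ∈ l, p w → householder w * T = T - (2 : 𝕜) • vecMulVec w (star w) ∧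
      T * householder w = T - (2 : 𝕜) • vecMulVec w (star w) := fun w hw hp => by
    have hTw' : T *ᵥ w = (1 : 𝕜) • w := by simp [hTw w hw, hp]
    have h₁ := householder_mul_of_mulVec_eq_smul hT (IsSelfAdjoint.one _) hTw'
    have h₂ := mul_householder_of_mulVec_eq_smul hTw'
    rw [mul_one] at h₁ h₂
    exact ⟨h₁, h₂⟩
  have hout : ∀ w ∈ l, ¬p w → householder w * T = T := fun w hw hp => by
    have hTw' : T *ᵥ w = (0 : 𝕜) • w := by simp [hTw w hw, hp]
    simpa using householder_mul_of_mulVec_eq_smul hT (IsSelfAdjoint.zero _) hTw'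
  set B := ((l.filter p).map householder).prod
  have hBT : B * T = s • T := by
    rw [← List.prod_map_mul_eq_prod_filter_map_mul l householder p
      (fun w hw hp => (hin w hw hp).1.trans (hin w hw hp).2.symm) hout, hprod, smul_one_mul]
  have hB1T : B * (1 - T) = 1 - T :=
    (MulAction.stabilizerSubmonoid (Matrix n n 𝕜) (1 - T)).list_prod_mem fun A hA => by
      obtain ⟨w, hw, rfl⟩ := List.mem_map.mp hA
      obtain ⟨hwl, hp⟩ := List.mem_filter.mp hw
      change householder w * (1 - T) = 1 - T
      rw [mul_sub, mul_one, (hin w hwl hp).1, householder]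
      abel
  calc B = B * T + B * (1 - T) := by rw [← mul_add, add_sub_cancel, mul_one]
    _ = 1 + (s - 1) • T := by rw [hBT, hB1T, sub_smul, one_smul]; abel

lemma pow_rank_eq_one_of_prod_householder {l : List (n → 𝕜)} (hl : ∀ w ∈ l, star w ⬝ᵥ w = 1)
    {s : 𝕜} (hprod : (l.map householder).prod = s • 1) {T : Matrix n n 𝕜} (hT : T.IsHermitian)
    (hT2 : IsIdempotentElem T) (p : (n → 𝕜) → Bool)
    (hTw : ∀ w ∈ l, T *ᵥ w = if p w then w else 0) : (s ^ 2) ^ T.rank = 1 := by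
  have hdet : (((l.filter p).map householder).prod).det = (-1) ^ (l.filter p).length := by
    rw [← coe_detMonoidHom, map_list_prod, List.map_map,
      List.map_congr_left (f := detMonoidHom ∘ householder) (g := fun _ => -1) fun w hw =>
        det_householder (hl w (List.mem_filter.mp hw).1),
      List.map_const', List.prod_replicate]
  rw [prod_map_householder_filter_eq_one_add_smul hprod hT p hTw,
    hT.det_one_add_smul_of_isIdempotentElem hT2, add_sub_cancel] at hdet
  rw [← pow_mul, mul_comm, pow_mul, hdet, ← pow_mul, mul_comm, pow_mul]
  norm_num

lemma forall_mem_of_prod_householder_eq_smul_one {l : List (n → 𝕜)}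
    (hl : ∀ w ∈ l, star w ⬝ᵥ w = 1) (hspan : ∀ x, (∀ w ∈ l, star w ⬝ᵥ x = 0) → x = 0) {s : 𝕜}
    (hs : IsPrimitiveRoot (s ^ 2) (Fintype.card n)) (hprod : (l.map householder).prod = s • 1)
    {T : Matrix n n 𝕜} (hT : T.IsHermitian) (p : (n → 𝕜) → Bool)
    (hTw : ∀ w ∈ l, T *ᵥ w = if p w then w else 0) {w₀ : n → 𝕜} (hw₀ : w₀ ∈ l)
    (hp₀ : p w₀) : ∀ w ∈ l, p w := by
  have hne : ∀ w ∈ l, w ≠ 0 := fun w hw h => by simpa [h] using hl w hw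
  have hT2 : IsIdempotentElem T := ext_of_forall_mulVec_eq hspan fun w hw => by
    rw [← mulVec_mulVec, hTw w hw]
    split_ifs <;> simp [hTw w hw, *]
  have hrank : T.rank ≠ 0 := by
    rw [Matrix.rank, Ne, Submodule.finrank_eq_zero]
    intro h
    have : w₀ ∈ LinearMap.range T.mulVecLin := ⟨w₀, by simp [hTw w₀ hw₀, hp₀]⟩
    rw [h, Submodule.mem_bot] at this
    exact hne w₀ hw₀ this
  have hdvd : Fintype.card n ∣ T.rank :=
    (hs.pow_eq_one_iff_dvd _).mp (pow_rank_eq_one_of_prod_householder hl hprod hT hT2 p hTw)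
  have hT1 : T = 1 := (IsIdempotentElem.iff_eq_one_of_isUnit (isUnit_of_rank_eq_card
    (le_antisymm (rank_le_card_width T) (Nat.le_of_dvd (Nat.pos_of_ne_zero hrank) hdvd)))).mp hT2
  intro w hw
  by_contra hp
  exact hne w hw (by simpa [hT1, hp] using hTw w hw)

theorem exists_eq_smul_one_of_commute_householder [Nontrivial n] {M : Matrix n n 𝕜}
    (hM : M ∈ unitaryGroup n 𝕜) {l : List (n → 𝕜)} (hl : ∀ w ∈ l, star w ⬝ᵥ w = 1)
    (hcomm : ∀ w ∈ l, Commute M (householder w)) {s : 𝕜}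
    (hs : IsPrimitiveRoot (s ^ 2) (Fintype.card n)) (hprod : (l.map householder).prod = s • 1) :
    ∃ c : 𝕜, M = c • 1 := by
  classical
  have hs1 : s ≠ 1 := by
    rintro rfl
    exact Fintype.one_lt_card.ne (by simpa using hs.eq_orderOf.symm)
  have hspan : ∀ x, (∀ w ∈ l, star w ⬝ᵥ x = 0) → x = 0 := fun x =>
    eq_zero_of_forall_dotProduct_eq_zero_of_prod_householder hprod hs1
  obtain ⟨w₀, hw₀⟩ : ∃ w₀, w₀ ∈ l := by
    refine List.exists_mem_of_ne_nil l fun hnil => ?_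
    obtain ⟨i⟩ := (inferInstance : Nonempty n)
    exact Pi.single_ne_zero_iff.mpr one_ne_zero (hspan (Pi.single i 1) (by simp [hnil]))
  set μ : (n → 𝕜) → 𝕜 := fun w => star w ⬝ᵥ (M *ᵥ w)
  have hMw : ∀ w ∈ l, M *ᵥ w = μ w • w := fun w hw =>
    mulVec_eq_smul_of_commute_householder (hl w hw) (hcomm w hw)
  obtain ⟨T, hTw⟩ := exists_mulVec_eq_ite_of_forall_mulVec_eq_smul μ hMw (μ w₀)
  have hT : T.IsHermitian := by
    refine isHermitian_of_forall_mulVec_eq_smul hspan (fun w => if μ w = μ w₀ then 1 else 0)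
      (fun w hw => by split_ifs <;> simp [hTw w hw, *]) fun v hv w hw hvw => ?_
    refine dotProduct_eq_zero_of_mem_unitaryGroup_of_ne hM (hl v hv) (hMw v hv) (hMw w hw) ?_
    rintro heq
    simp [heq] at hvw
  have hall := forall_mem_of_prod_householder_eq_smul_one hl hspan hs hprod hT
    (fun w => decide (μ w = μ w₀)) (by simpa using hTw) hw₀ (by simp)
  refine ⟨μ w₀, ext_of_forall_mulVec_eq hspan fun w hw => ?_⟩
  rw [hMw w hw, of_decide_eq_true (hall w hw), smul_mulVec, one_mulVec]

end Matrix

open Complex Real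

lemma Dmu_eq_smul_householder {r : ℕ} (hr : 0 < r) :
    Dmu r = cexp (-(π / r) * I) • householder (Pi.single ⟨0, hr⟩ 1) := by
  ext i j
  by_cases hij : i = j
  · subst hij
    by_cases hi : (i : ℕ) = 0
    · obtain rfl : i = ⟨0, hr⟩ := Fin.ext hi
      have : (π : ℂ) * (r - 1) / r * I = π * I + -(π / r) * I := by
        field_simp [Nat.cast_ne_zero.mpr hr.ne']
        ring
      simp [Dmu, householder, vecMulVec_apply, this, Complex.exp_add, exp_pi_mul_I]
      norm_num
    · simp [Dmu, householder, vecMulVec_apply, hi, Fin.ext_iff]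
  · simp [Dmu, householder, vecMulVec_apply, hij, Pi.single_apply]
    rintro rfl rfl
    exact hij rfl

lemma exists_eq_smul_householder_of_mem_Cmu {r : ℕ} (hr : 0 < r) {X : Matrix (Fin r) (Fin r) ℂ}
    (hX : X ∈ Cmu r) :
    ∃ w : Fin r → ℂ, star w ⬝ᵥ w = 1 ∧ X = cexp (-(π / r) * I) • householder w := by
  obtain ⟨U, hU, rfl⟩ := hX
  have hUu := (mem_specialUnitaryGroup_iff.mp hU).1
  refine ⟨U *ᵥ Pi.single ⟨0, hr⟩ 1, ?_, ?_⟩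
  · rw [star_mulVec_dotProduct_mulVec_of_mem_unitaryGroup hUu]
    simp
  · rw [Dmu_eq_smul_householder hr, ← mul_householder_mul_star_of_mem_unitaryGroup hUu,
      Matrix.mul_smul, Matrix.smul_mul, inv_eq_left_inv (mem_unitaryGroup_iff'.mp hUu)]

lemma isPrimitiveRoot_inv_exp_pow_succ_sq {r : ℕ} (hr : r ≠ 0) :
    IsPrimitiveRoot ((cexp (-(π / r) * I) ^ (r + 1))⁻¹ ^ 2) r := by
  set ζ := cexp (-(π / r) * I)
  have hω : IsPrimitiveRoot (ζ⁻¹ ^ 2) r := by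
    convert isPrimitiveRoot_exp r hr using 1
    rw [← Complex.exp_neg, ← Complex.exp_nat_mul]
    congr 1
    push_cast
    ring
  convert hω using 1
  calc (ζ ^ (r + 1))⁻¹ ^ 2 = (ζ⁻¹ ^ 2) ^ r * ζ⁻¹ ^ 2 := by ring
    _ = ζ⁻¹ ^ 2 := by rw [hω.pow_eq_one, one_mul]

/-- For `r ≥ 2`, the stabilizer of any point of `R` under the simultaneous conjugation action
of `SU(r)` is the center of `SU(r)`: any `M ∈ SU(r)` commuting with every `Cⱼ` is a scalar
matrix `c • I` with `c^r = 1`. -/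
theorem stabilizer_in_R_is_center (r : ℕ) (hr : 2 ≤ r)
    (C : Fin (r + 1) → Matrix (Fin r) (Fin r) ℂ) (hC : C ∈ Rset r)
    (M : Matrix (Fin r) (Fin r) ℂ) (hM : M ∈ specialUnitaryGroup (Fin r) ℂ)
    (hcomm : ∀ j, M * C j = C j * M) :
    ∃ c : ℂ, c ^ r = 1 ∧ M = c • (1 : Matrix (Fin r) (Fin r) ℂ) := by
  obtain ⟨hCmu, hprod⟩ := hC
  obtain ⟨hMu, hMdet⟩ := mem_specialUnitaryGroup_iff.mp hM
  choose w hw hCw using fun j => exists_eq_smul_householder_of_mem_Cmu (by omega) (hCmu j)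
  set ζ := cexp (-(π / r) * I)
  have hprod' : ((List.ofFn w).map householder).prod = (ζ ^ (r + 1))⁻¹ • 1 := by
    have hC : List.ofFn C = (List.ofFn w).map (ζ • householder ·) := by
      rw [List.map_ofFn]
      exact congrArg List.ofFn (funext hCw)
    rw [hC, List.prod_map_smul, List.length_ofFn] at hprod
    exact (eq_inv_smul_iff₀ (pow_ne_zero _ (Complex.exp_ne_zero _))).mpr hprod
  have hcomm' : ∀ v ∈ List.ofFn w, Commute M (householder v) := by
    refine List.forall_mem_ofFn_iff.mpr fun j => ?_
    have h := (show Commute M (C j) from hcomm j).smul_right ζ⁻¹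
    rwa [hCw j, inv_smul_smul₀ (Complex.exp_ne_zero _)] at h
  have : Nontrivial (Fin r) := Fin.nontrivial_iff_two_le.mpr hr
  obtain ⟨c, rfl⟩ := exists_eq_smul_one_of_commute_householder hMu
    (List.forall_mem_ofFn_iff.mpr hw) hcomm'
    (by rw [Fintype.card_fin]; exact isPrimitiveRoot_inv_exp_pow_succ_sq (by omega)) hprod'
  exact ⟨c, by simpa using hMdet, rfl⟩
end
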